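/- arXiv:2305.06128 — 2 statements merged into one kernel-verified Lean document; each statement's English description precedes it below -/
import Mathlib

section
/- The Arf invariant of a quadratic form q with polarity equal to the symplectic form is independent of the choice of symplectic basis. -/
/-!
Write `χ(a) = (-1)^a` for `a ∈ 𝔽₂`. The Gauss sum `∑_{v ∈ V} χ(q v)` depends only on `q`.
In the coordinates of a symplectic basis, `q` splits as a sum over the hyperbolic planes
`⟨eᵢ, fᵢ⟩`, so the Gauss sum factors as a product of `g` sums over `𝔽₂²`; each of these equals
`2 χ(q(eᵢ) q(fᵢ))`. Hence the Gauss sum is `2^g χ(arf q)` for every symplectic basis, and `χ` is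
injective.
-/

open Finset

def signChar (a : ZMod 2) : ℤ := (-1) ^ a.val

lemma signChar_add (a b : ZMod 2) : signChar (a + b) = signChar a * signChar b := by
  revert a b
  decide

lemma signChar_injective : Function.Injective signChar := by decide

lemma signChar_sum {ι : Type*} (s : Finset ι) (f : ι → ZMod 2) :
    signChar (∑ i ∈ s, f i) = ∏ i ∈ s, signChar (f i) := by
  induction s using Finset.cons_induction with
  | empty => rfl
  | cons a s ha ih => rw [sum_cons, prod_cons, signChar_add, ih]

lemma sum_signChar_hyperbolic (u v : ZMod 2) :
    ∑ x : ZMod 2 × ZMod 2, signChar (x.1 * u + x.2 * v + x.1 * x.2) = 2 * signChar (u * v) := by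
  revert u v
  decide

lemma Fintype.sum_prod_inl_inr_eq_prod_sum {ι α R : Type*} [Fintype ι] [DecidableEq ι]
    [Fintype α] [CommSemiring R] (F : ι → α → α → R) :
    ∑ c : ι ⊕ ι → α, ∏ i, F i (c (Sum.inl i)) (c (Sum.inr i)) =
      ∏ i, ∑ x : α × α, F i x.1 x.2 := by
  rw [Fintype.prod_sum, ← ((Equiv.arrowProdEquivProdArrow _ _ _).trans
    (Equiv.sumArrowEquivProdArrow _ _ _).symm).sum_comp]
  rfl

section QuadraticRefinement

variable {R V : Type*} [CommRing R] [AddCommGroup V] [Module R V]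
  {B : V →ₗ[R] V →ₗ[R] R} {q : V → R}

lemma map_zero_of_polar (hq : ∀ x y, q (x + y) = q x + q y + B x y) : q 0 = 0 := by
  simpa using hq 0 0

lemma map_sum_of_polar_eq_zero (hq : ∀ x y, q (x + y) = q x + q y + B x y)
    {ι : Type*} (s : Finset ι) (u : ι → V) (h : ∀ i j, i ≠ j → B (u i) (u j) = 0) :
    q (∑ i ∈ s, u i) = ∑ i ∈ s, q (u i) := by
  induction s using Finset.cons_induction with
  | empty => simpa using map_zero_of_polar hq
  | cons a s ha ih =>
    have hB : B (u a) (∑ i ∈ s, u i) = 0 := by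
      rw [map_sum]
      exact sum_eq_zero fun i hi => h a i (by rintro rfl; exact ha hi)
    rw [sum_cons, sum_cons, hq, ih, hB, add_zero]

end QuadraticRefinement

lemma map_smul_of_polar_zmod_two {V : Type*} [AddCommGroup V] [Module (ZMod 2) V]
    {B : V →ₗ[ZMod 2] V →ₗ[ZMod 2] ZMod 2} {q : V → ZMod 2}
    (hq : ∀ x y, q (x + y) = q x + q y + B x y) (c : ZMod 2) (x : V) :
    q (c • x) = c * q x := by
  obtain rfl | rfl : c = 0 ∨ c = 1 := by revert c; decide
  · simpa using map_zero_of_polar hq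
  · simp

section Symplectic

variable {g : ℕ} {V : Type*} [AddCommGroup V] [Module (ZMod 2) V]

structure IsSymplecticBasis (B : V →ₗ[ZMod 2] V →ₗ[ZMod 2] ZMod 2)
    (b : Module.Basis (Fin g ⊕ Fin g) (ZMod 2) V) : Prop where
  inl_inr : ∀ i j, B (b (Sum.inl i)) (b (Sum.inr j)) = if i = j then 1 else 0
  inl_inl : ∀ i j, B (b (Sum.inl i)) (b (Sum.inl j)) = 0
  inr_inr : ∀ i j, B (b (Sum.inr i)) (b (Sum.inr j)) = 0
  inr_inl : ∀ i j, B (b (Sum.inr i)) (b (Sum.inl j)) = if i = j then 1 else 0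

noncomputable def arf (q : V → ZMod 2) (b : Module.Basis (Fin g ⊕ Fin g) (ZMod 2) V) : ZMod 2 :=
  ∑ i, q (b (Sum.inl i)) * q (b (Sum.inr i))

variable {B : V →ₗ[ZMod 2] V →ₗ[ZMod 2] ZMod 2}
  {b : Module.Basis (Fin g ⊕ Fin g) (ZMod 2) V} {q : V → ZMod 2}

lemma IsSymplecticBasis.map_equivFun_symm (hb : IsSymplecticBasis B b)
    (hq : ∀ x y, q (x + y) = q x + q y + B x y) (c : Fin g ⊕ Fin g → ZMod 2) :
    q (b.equivFun.symm c) = ∑ i, (c (Sum.inl i) * q (b (Sum.inl i)) +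
      c (Sum.inr i) * q (b (Sum.inr i)) + c (Sum.inl i) * c (Sum.inr i)) := by
  set u : Fin g → V := fun i => c (Sum.inl i) • b (Sum.inl i) + c (Sum.inr i) • b (Sum.inr i)
  have hsum : b.equivFun.symm c = ∑ i, u i := by
    rw [Module.Basis.equivFun_symm_apply, Fintype.sum_sum_type, ← sum_add_distrib]
  have horth : ∀ i j, i ≠ j → B (u i) (u j) = 0 := by
    intro i j hij
    simp only [u, map_add, map_smul, LinearMap.add_apply, LinearMap.smul_apply, hb.inl_inl,
      hb.inl_inr, hb.inr_inl, hb.inr_inr, if_neg hij, smul_zero, add_zero]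
  rw [hsum, map_sum_of_polar_eq_zero hq _ u horth]
  refine sum_congr rfl fun i _ => ?_
  rw [hq, map_smul_of_polar_zmod_two hq, map_smul_of_polar_zmod_two hq]
  simp [hb.inl_inr, mul_comm]

lemma IsSymplecticBasis.finsum_signChar (hb : IsSymplecticBasis B b)
    (hq : ∀ x y, q (x + y) = q x + q y + B x y) :
    ∑ᶠ v, signChar (q v) = 2 ^ g * signChar (arf q b) := by
  rw [← finsum_comp_equiv b.equivFun.symm.toEquiv, finsum_eq_sum_of_fintype]
  simp only [LinearEquiv.coe_toEquiv, hb.map_equivFun_symm hq, signChar_sum]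
  rw [Fintype.sum_prod_inl_inr_eq_prod_sum (fun i x y =>
      signChar (x * q (b (Sum.inl i)) + y * q (b (Sum.inr i)) + x * y))]
  simp only [sum_signChar_hyperbolic, prod_mul_distrib, prod_const, card_univ,
    Fintype.card_fin, arf, signChar_sum]

end Symplectic

/-- The Arf invariant `∑ q(eᵢ)q(fᵢ)` of a quadratic form `q` with polarity equal
to the symplectic form on a `2g`-dimensional `F₂`-vector space does not depend on the choice of
symplectic basis `(e₁,…,e_g,f₁,…,f_g)`. -/
theorem stmt1 (g : ℕ) (V : Type*) [AddCommGroup V] [Module (ZMod 2) V]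
    (B : V →ₗ[ZMod 2] V →ₗ[ZMod 2] ZMod 2)
    (b b' : Module.Basis (Fin g ⊕ Fin g) (ZMod 2) V)
    (hef : ∀ i j, B (b (Sum.inl i)) (b (Sum.inr j)) = if i = j then 1 else 0)
    (hee : ∀ i j, B (b (Sum.inl i)) (b (Sum.inl j)) = 0)
    (hff : ∀ i j, B (b (Sum.inr i)) (b (Sum.inr j)) = 0)
    (hfe : ∀ i j, B (b (Sum.inr i)) (b (Sum.inl j)) = if i = j then 1 else 0)
    (hef' : ∀ i j, B (b' (Sum.inl i)) (b' (Sum.inr j)) = if i = j then 1 else 0)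
    (hee' : ∀ i j, B (b' (Sum.inl i)) (b' (Sum.inl j)) = 0)
    (hff' : ∀ i j, B (b' (Sum.inr i)) (b' (Sum.inr j)) = 0)
    (hfe' : ∀ i j, B (b' (Sum.inr i)) (b' (Sum.inl j)) = if i = j then 1 else 0)
    (q : V → ZMod 2) (hq : ∀ x y, q (x + y) = q x + q y + B x y) :
    ∑ i : Fin g, q (b (Sum.inl i)) * q (b (Sum.inr i)) =
      ∑ i : Fin g, q (b' (Sum.inl i)) * q (b' (Sum.inr i)) := by
  have hgauss := (IsSymplecticBasis.finsum_signChar ⟨hef, hee, hff, hfe⟩ hq).symm.trans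
    (IsSymplecticBasis.finsum_signChar ⟨hef', hee', hff', hfe'⟩ hq)
  exact signChar_injective (mul_left_cancel₀ (by positivity) hgauss)
end

section
/- Let π : C̃ → C be an étale double cover given by 2-torsion η, and M a theta-characteristic on C such that both M and M ⊗ η are odd (h^0 odd). Then π^*M is an effective even theta-characteristic on C̃, i.e., a vanishing thetanull: (π^*M)^{⊗2} ≅ ω_{C̃}, h^0(C̃, π^*M) ≥ 2, and h^0(C̃, π^*M) is even. -/
theorem stmt14_general (PicC PicCt : Type*) [AddCommGroup PicC] [AddCommGroup PicCt]
    (pullπ : PicC →+ PicCt) (η ωC : PicC) (ωCt : PicCt)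
    (h0C : PicC → ℕ) (h0Ct : PicCt → ℕ)
    (hω : ωCt = pullπ ωC)
    (hpushpull : ∀ M : PicC, h0Ct (pullπ M) = h0C M + h0C (M + η))
    (M : PicC) (hM : 2 • M = ωC) (hModd : Odd (h0C M)) (hMηodd : Odd (h0C (M + η))) :
    2 • (pullπ M) = ωCt ∧ 2 ≤ h0Ct (pullπ M) ∧ Even (h0Ct (pullπ M)) := by
  rw [hpushpull M]
  refine ⟨by rw [hω, ← hM, map_nsmul], ?_, hModd.add_odd hMηodd⟩
  have := hModd.pos
  have := hMηodd.pos
  omega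

/-- Let `π : C̃ → C` be the étale double cover of a genus `g ≥ 2` curve given by
a nontrivial 2-torsion line bundle `η`, and let `M` be a theta-characteristic on `C`
(`M^{⊗2} ≅ ω_C`) such that both `M` and `M ⊗ η` are odd (`h^0` odd). Then `π^*M` is an
effective even theta-characteristic (vanishing thetanull) on `C̃`:
`(π^*M)^{⊗2} ≅ ω_{C̃}`, `h^0(C̃, π^*M) ≥ 2`, and `h^0(C̃, π^*M)` is even. Picard groups are
written additively; `ω_{C̃} ≅ π^*ω_C` and `h^0(C̃,π^*·) = h^0(C,·) + h^0(C,·⊗η)` are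
supplied as hypotheses. -/
theorem stmt14 (PicC PicCt : Type*) [AddCommGroup PicC] [AddCommGroup PicCt]
    (g : ℕ) (hg : 2 ≤ g)
    (pullπ : PicC →+ PicCt) (η ωC : PicC) (ωCt : PicCt)
    (hη2 : 2 • η = 0) (hηne : η ≠ 0)
    (h0C : PicC → ℕ) (h0Ct : PicCt → ℕ)
    (hω : ωCt = pullπ ωC)
    (hpushpull : ∀ M : PicC, h0Ct (pullπ M) = h0C M + h0C (M + η))
    (M : PicC) (hM : 2 • M = ωC) (hModd : Odd (h0C M)) (hMηodd : Odd (h0C (M + η))) :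
    2 • (pullπ M) = ωCt ∧ 2 ≤ h0Ct (pullπ M) ∧ Even (h0Ct (pullπ M)) :=
  stmt14_general PicC PicCt pullπ η ωC ωCt h0C h0Ct hω hpushpull M hM hModd hMηodd
end
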